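/- Suppose the CATE τ(X) is transportable between the trial distribution and the observational distribution, the trial satisfies internal validity with P(T=1)=π, and the support of the trial covariate distribution is included in that of the observational covariate distribution. Let Q_X be the observational covariate distribution restricted to the trial support, and let w(x) = dQ_X/dP^rct_X(x). Then E_{Q_X}[τ(X)] = E_{P^rct}[Y·(T/π − (1−T)/(1−π))·w(X)]. -/

import Mathlib

/-!
Reweighting by `w` turns `E_Q[τ(X)]` into `E[w(X) τ(X)]` under the trial distribution. The CATE
characterisation, stated for bounded test functions, extends to the unbounded weight `w` by
truncating it at level `n` and passing to the limit with dominated convergence, so this equals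
`E[w(X) (Y1 - Y0)]`. Finally, since `T` is a binary treatment independent of
`(X, Y0, Y1)` with `E[T] = π`, the inverse-propensity weights recover `E[w(X) Y1]` from the treated
arm and `E[w(X) Y0]` from the control arm.
-/

open MeasureTheory ProbabilityTheory Filter Topology

section

variable {Ω 𝒳 : Type*} [MeasurableSpace Ω] [MeasurableSpace 𝒳] {μ : Measure Ω}
  {X : Ω → 𝒳}

section Reweighting

variable {w : 𝒳 → ℝ}

lemma integral_map_withDensity_ofReal (hX : Measurable X) (hwm : Measurable w)
    (hw0 : ∀ x, 0 ≤ w x) {f : 𝒳 → ℝ} (hf : AEStronglyMeasurable f (μ.map X)) :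
    ∫ x, f x ∂(μ.map X).withDensity (fun x => ENNReal.ofReal (w x))
      = ∫ ω, w (X ω) * f (X ω) ∂μ := by
  refine (integral_withDensity_eq_integral_smul hwm.real_toNNReal f).trans ?_
  simp only [NNReal.smul_def, Real.coe_toNNReal _ (hw0 _), smul_eq_mul]
  exact integral_map hX.aemeasurable (hwm.aestronglyMeasurable.mul hf)

lemma integrable_map_withDensity_ofReal_iff (hX : Measurable X) (hwm : Measurable w)
    (hw0 : ∀ x, 0 ≤ w x) {f : 𝒳 → ℝ} (hf : AEStronglyMeasurable f (μ.map X)) :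
    Integrable f ((μ.map X).withDensity (fun x => ENNReal.ofReal (w x)))
      ↔ Integrable (fun ω => w (X ω) * f (X ω)) μ := by
  refine (integrable_withDensity_iff_integrable_smul hwm.real_toNNReal).trans ?_
  simp only [NNReal.smul_def, Real.coe_toNNReal _ (hw0 _), smul_eq_mul]
  exact integrable_map_measure (hwm.aestronglyMeasurable.mul hf) hX.aemeasurable

lemma integrable_comp_of_isFiniteMeasure_map_withDensity_ofReal (hX : Measurable X)
    (hwm : Measurable w) (hw0 : ∀ x, 0 ≤ w x)
    [IsFiniteMeasure ((μ.map X).withDensity (fun x => ENNReal.ofReal (w x)))] :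
    Integrable (fun ω => w (X ω)) μ := by
  simpa using (integrable_map_withDensity_ofReal_iff hX hwm hw0 aestronglyMeasurable_const).1
    (integrable_const (1 : ℝ))

end Reweighting

section Truncation

lemma tendsto_integral_min_natCast_mul {h F : Ω → ℝ} (hh : AEStronglyMeasurable h μ)
    (hh0 : ∀ ω, 0 ≤ h ω) (hF : AEStronglyMeasurable F μ)
    (hhF : Integrable (fun ω => h ω * F ω) μ) :
    Tendsto (fun n : ℕ => ∫ ω, min (h ω) (n + 1) * F ω ∂μ) atTop
      (𝓝 (∫ ω, h ω * F ω ∂μ)) := by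
  refine tendsto_integral_of_dominated_convergence (fun ω => ‖h ω * F ω‖)
    (fun n => (hh.inf aestronglyMeasurable_const).mul hF) hhF.norm
    (fun n => ae_of_all _ fun ω => ?_) (ae_of_all _ fun ω => ?_)
  · rw [norm_mul, norm_mul, Real.norm_of_nonneg (le_min (hh0 ω) (by positivity)),
      Real.norm_of_nonneg (hh0 ω)]
    exact mul_le_mul_of_nonneg_right (min_le_left _ _) (norm_nonneg _)
  · refine tendsto_const_nhds.congr' ?_
    filter_upwards [eventually_ge_atTop ⌈h ω⌉₊] with n hn
    rw [min_eq_left ((Nat.le_ceil _).trans (by exact_mod_cast hn.trans n.le_succ))]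

variable {F G : Ω → ℝ}

lemma integral_comp_mul_eq_of_abs_le
    (hFG : ∀ g : 𝒳 → ℝ, Measurable g → (∀ x, |g x| ≤ 1) →
      ∫ ω, g (X ω) * F ω ∂μ = ∫ ω, g (X ω) * G ω ∂μ)
    {g : 𝒳 → ℝ} (hg : Measurable g) {c : ℝ} (hc : 0 < c) (hgc : ∀ x, |g x| ≤ c) :
    ∫ ω, g (X ω) * F ω ∂μ = ∫ ω, g (X ω) * G ω ∂μ := by
  have hscaled := hFG (fun x => g x / c) (hg.div_const c) fun x => by
    rw [abs_div, abs_of_pos hc, div_le_one hc]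
    exact hgc x
  simp only [div_eq_inv_mul, mul_assoc, integral_const_mul] at hscaled
  exact mul_left_cancel₀ (inv_ne_zero hc.ne') hscaled

lemma integral_comp_mul_eq_of_integrable
    (hFG : ∀ g : 𝒳 → ℝ, Measurable g → (∀ x, |g x| ≤ 1) →
      ∫ ω, g (X ω) * F ω ∂μ = ∫ ω, g (X ω) * G ω ∂μ)
    (hX : Measurable X) (hF : AEStronglyMeasurable F μ) (hG : AEStronglyMeasurable G μ)
    {w : 𝒳 → ℝ} (hwm : Measurable w) (hw0 : ∀ x, 0 ≤ w x)
    (hwF : Integrable (fun ω => w (X ω) * F ω) μ) (hwG : Integrable (fun ω => w (X ω) * G ω) μ) :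
    ∫ ω, w (X ω) * F ω ∂μ = ∫ ω, w (X ω) * G ω ∂μ := by
  have hwX : AEStronglyMeasurable (fun ω => w (X ω)) μ := (hwm.comp hX).aestronglyMeasurable
  have htrunc (n : ℕ) : ∫ ω, min (w (X ω)) (n + 1) * F ω ∂μ
      = ∫ ω, min (w (X ω)) (n + 1) * G ω ∂μ :=
    integral_comp_mul_eq_of_abs_le hFG (hwm.min measurable_const) n.cast_add_one_pos fun x => by
      rw [abs_of_nonneg (le_min (hw0 x) (by positivity))]
      exact min_le_right _ _
  exact tendsto_nhds_unique
    ((tendsto_integral_min_natCast_mul hwX (fun ω => hw0 _) hF hwF).congr htrunc)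
    (tendsto_integral_min_natCast_mul hwX (fun ω => hw0 _) hG hwG)

end Truncation

section InversePropensityWeighting

lemma ipw_mul_eq {t y0 y1 π : ℝ} (ht : t = 0 ∨ t = 1) (hπ0 : π ≠ 0) (hπ1 : 1 - π ≠ 0) :
    (t * y1 + (1 - t) * y0) * (t / π - (1 - t) / (1 - π))
      = t * y1 / π - (1 - t) * y0 / (1 - π) := by
  rcases ht with rfl | rfl <;> field_simp <;> ring

lemma integral_eq_measureReal_of_eq_zero_or_one {T : Ω → ℝ} (hT : Measurable T)
    (hTbin : ∀ ω, T ω = 0 ∨ T ω = 1) :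
    ∫ ω, T ω ∂μ = μ.real {ω | T ω = 1} := by
  change _ = μ.real (T ⁻¹' {1})
  rw [← integral_indicator_one (hT (measurableSet_singleton 1))]
  refine integral_congr_ae (ae_of_all _ fun ω => ?_)
  rcases hTbin ω with h | h <;> simp [Set.indicator, h]

lemma integral_ipw_eq_integral_sub [IsProbabilityMeasure μ] {T A B : Ω → ℝ} {π : ℝ}
    (hπ : π ∈ Set.Ioo (0 : ℝ) 1) (hT : Measurable T) (hTbin : ∀ ω, T ω = 0 ∨ T ω = 1)
    (hπT : μ {ω | T ω = 1} = ENNReal.ofReal π) (hA : Integrable A μ) (hB : Integrable B μ)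
    (hTA : IndepFun T A μ) (hTB : IndepFun T B μ) :
    ∫ ω, (T ω * A ω / π - (1 - T ω) * B ω / (1 - π)) ∂μ = ∫ ω, A ω ∂μ - ∫ ω, B ω ∂μ := by
  have hET : ∫ ω, T ω ∂μ = π := by
    rw [integral_eq_measureReal_of_eq_zero_or_one hT hTbin, measureReal_def, hπT,
      ENNReal.toReal_ofReal hπ.1.le]
  have hTbdd : ∀ᵐ ω ∂μ, ‖T ω‖ ≤ 1 :=
    ae_of_all _ fun ω => by rcases hTbin ω with h | h <;> simp [h]
  have hTA_int := hA.bdd_mul hT.aestronglyMeasurable hTbdd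
  have hTB_int := hB.bdd_mul hT.aestronglyMeasurable hTbdd
  have hTA' : ∫ ω, T ω * A ω ∂μ = π * ∫ ω, A ω ∂μ :=
    hET ▸ hTA.integral_fun_mul_eq_mul_integral hT.aestronglyMeasurable hA.aestronglyMeasurable
  have hTB' : ∫ ω, T ω * B ω ∂μ = π * ∫ ω, B ω ∂μ :=
    hET ▸ hTB.integral_fun_mul_eq_mul_integral hT.aestronglyMeasurable hB.aestronglyMeasurable
  have hπ1 : 1 - π ≠ 0 := sub_ne_zero.2 hπ.2.ne'
  calc ∫ ω, (T ω * A ω / π - (1 - T ω) * B ω / (1 - π)) ∂μ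
      = (∫ ω, T ω * A ω ∂μ) / π - (∫ ω, B ω ∂μ - ∫ ω, T ω * B ω ∂μ) / (1 - π) := by
        simp only [sub_mul, one_mul]
        rw [integral_sub, integral_div, integral_div, integral_sub hB hTB_int]
        · exact hTA_int.div_const _
        · exact (hB.sub hTB_int).div_const _
    _ = ∫ ω, A ω ∂μ - ∫ ω, B ω ∂μ := by
        rw [hTA', hTB']
        field_simp [hπ.1.ne']

end InversePropensityWeighting

end

theorem transported_ipw_identification_general {Ω 𝒳 𝒰 : Type*} [MeasurableSpace Ω]
    [MeasurableSpace 𝒳] [MeasurableSpace 𝒰]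
    (μ : Measure Ω) [IsProbabilityMeasure μ]
    (X : Ω → 𝒳) (U : Ω → 𝒰) (Y0 Y1 Y T : Ω → ℝ) (π C : ℝ)
    (τ w : 𝒳 → ℝ) (Q : Measure 𝒳)
    (hX : Measurable X)
    (hY0 : Measurable Y0) (hY1 : Measurable Y1) (hT : Measurable T)
    (hτm : Measurable τ) (hwm : Measurable w) (hw0 : ∀ x, 0 ≤ w x)
    (hTbin : ∀ ω, T ω = 0 ∨ T ω = 1)
    (hY : ∀ ω, Y ω = T ω * Y1 ω + (1 - T ω) * Y0 ω)
    (hbdd0 : ∀ ω, |Y0 ω| ≤ C) (hbdd1 : ∀ ω, |Y1 ω| ≤ C)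
    (hπ : π ∈ Set.Ioo (0:ℝ) 1)
    (hπT : μ {ω | T ω = 1} = ENNReal.ofReal π)
    (hindep : IndepFun T (fun ω => (X ω, U ω, Y0 ω, Y1 ω)) μ)
    (hcate : ∀ g : 𝒳 → ℝ, Measurable g → (∀ x, |g x| ≤ 1) →
      ∫ ω, g (X ω) * (Y1 ω - Y0 ω) ∂μ = ∫ ω, g (X ω) * τ (X ω) ∂μ)
    (hQ : Q = (μ.map X).withDensity (fun x => ENNReal.ofReal (w x)))
    [IsProbabilityMeasure Q]
    (hτint : Integrable τ Q) :
    ∫ x, τ x ∂Q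
      = ∫ ω, Y ω * (T ω / π - (1 - T ω) / (1 - π)) * w (X ω) ∂μ := by
  subst hQ
  have hwX := integrable_comp_of_isFiniteMeasure_map_withDensity_ofReal hX hwm hw0 (μ := μ)
  have hwY (Z : Ω → ℝ) (hZ : Measurable Z) (hZC : ∀ ω, |Z ω| ≤ C) :
      Integrable (fun ω => Z ω * w (X ω)) μ :=
    hwX.bdd_mul hZ.aestronglyMeasurable (ae_of_all _ hZC)
  have hwY10 : Integrable (fun ω => w (X ω) * (Y1 ω - Y0 ω)) μ :=
    ((hwY Y1 hY1 hbdd1).sub (hwY Y0 hY0 hbdd0)).congr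
      (ae_of_all _ fun ω => by simp only [Pi.sub_apply]; ring)
  have hcate_w : ∫ ω, w (X ω) * (Y1 ω - Y0 ω) ∂μ = ∫ ω, w (X ω) * τ (X ω) ∂μ :=
    integral_comp_mul_eq_of_integrable hcate hX (hY1.sub hY0).aestronglyMeasurable
      (hτm.comp hX).aestronglyMeasurable hwm hw0 hwY10
      ((integrable_map_withDensity_ofReal_iff hX hwm hw0 hτm.aestronglyMeasurable).1 hτint)
  have hindep_w (Z : (𝒳 × 𝒰 × ℝ × ℝ) → ℝ) (hZ : Measurable Z) :
      IndepFun T (fun ω => Z (X ω, U ω, Y0 ω, Y1 ω) * w (X ω)) μ :=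
    hindep.comp measurable_id (hZ.mul (hwm.comp measurable_fst))
  calc ∫ x, τ x ∂(μ.map X).withDensity (fun x => ENNReal.ofReal (w x))
      = ∫ ω, w (X ω) * (Y1 ω - Y0 ω) ∂μ := by
        rw [integral_map_withDensity_ofReal hX hwm hw0 hτm.aestronglyMeasurable, hcate_w]
    _ = ∫ ω, Y1 ω * w (X ω) ∂μ - ∫ ω, Y0 ω * w (X ω) ∂μ := by
        rw [← integral_sub (hwY Y1 hY1 hbdd1) (hwY Y0 hY0 hbdd0)]
        exact integral_congr_ae (ae_of_all _ fun ω => by ring)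
    _ = ∫ ω, (T ω * (Y1 ω * w (X ω)) / π - (1 - T ω) * (Y0 ω * w (X ω)) / (1 - π)) ∂μ :=
        (integral_ipw_eq_integral_sub hπ hT hTbin hπT (hwY Y1 hY1 hbdd1) (hwY Y0 hY0 hbdd0)
          (hindep_w _ measurable_snd.snd.snd) (hindep_w _ measurable_snd.snd.fst)).symm
    _ = ∫ ω, Y ω * (T ω / π - (1 - T ω) / (1 - π)) * w (X ω) ∂μ := by
        refine integral_congr_ae (ae_of_all _ fun ω => ?_)
        dsimp only
        rw [hY ω, ipw_mul_eq (hTbin ω) hπ.1.ne' (sub_ne_zero.2 hπ.2.ne')]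
        ring

/-- Lemma 2: let `μ` be the trial distribution with covariate
map `X`, binary treatment `T` with `P(T=1) = π`, potential outcomes `Y0, Y1`,
observed `Y = T·Y1 + (1−T)·Y0`, and internal validity
(`T ⊥ (X, U, Y0, Y1)`).  Let `τ` be the common CATE (transportability:
`τ` is the CATE of both the trial and the observational distribution),
characterized by `∫ g(X)(Y1−Y0) dμ = ∫ g(X) τ(X) dμ` for bounded measurable
`g`.  Let `Q = (μ.map X).withDensity w` be the restricted observational
covariate distribution, whose density w.r.t. the trial covariate distribution
is the importance weight `w` (support inclusion).  Then
`E_Q[τ(X)] = E_μ[Y·(T/π − (1−T)/(1−π))·w(X)]`. -/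
theorem transported_ipw_identification {Ω 𝒳 𝒰 : Type*} [MeasurableSpace Ω]
    [MeasurableSpace 𝒳] [MeasurableSpace 𝒰]
    (μ : Measure Ω) [IsProbabilityMeasure μ]
    (X : Ω → 𝒳) (U : Ω → 𝒰) (Y0 Y1 Y T : Ω → ℝ) (π C : ℝ)
    (τ w : 𝒳 → ℝ) (Q : Measure 𝒳)
    (hX : Measurable X) (hU : Measurable U)
    (hY0 : Measurable Y0) (hY1 : Measurable Y1) (hT : Measurable T)
    (hτm : Measurable τ) (hwm : Measurable w) (hw0 : ∀ x, 0 ≤ w x)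
    (hTbin : ∀ ω, T ω = 0 ∨ T ω = 1)
    (hY : ∀ ω, Y ω = T ω * Y1 ω + (1 - T ω) * Y0 ω)
    (hbdd0 : ∀ ω, |Y0 ω| ≤ C) (hbdd1 : ∀ ω, |Y1 ω| ≤ C)
    (hπ : π ∈ Set.Ioo (0:ℝ) 1)
    (hπT : μ {ω | T ω = 1} = ENNReal.ofReal π)
    (hindep : IndepFun T (fun ω => (X ω, U ω, Y0 ω, Y1 ω)) μ)
    (hcate : ∀ g : 𝒳 → ℝ, Measurable g → (∀ x, |g x| ≤ 1) →
      ∫ ω, g (X ω) * (Y1 ω - Y0 ω) ∂μ = ∫ ω, g (X ω) * τ (X ω) ∂μ)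
    (hQ : Q = (μ.map X).withDensity (fun x => ENNReal.ofReal (w x)))
    [IsProbabilityMeasure Q]
    (hτint : Integrable τ Q)
    (hwint : Integrable (fun ω => Y ω * (T ω / π - (1 - T ω) / (1 - π)) * w (X ω)) μ) :
    ∫ x, τ x ∂Q
      = ∫ ω, Y ω * (T ω / π - (1 - T ω) / (1 - π)) * w (X ω) ∂μ :=
  transported_ipw_identification_general μ X U Y0 Y1 Y T π C τ w Q hX hY0 hY1 hT hτm hwm hw0 hTbin
    hY hbdd0 hbdd1 hπ hπT hindep hcate hQ hτint
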